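/- Let H be a complex Hilbert space and A : H → H a bounded linear operator satisfying 2(Re⟨Ax, x⟩)² ≤ Re⟨A²x, x⟩·‖x‖² + ‖Ax‖²·‖x‖² for every x ∈ H. Then for every u₀ with ‖u₀‖ = 1And with h(t) = ‖exp(−t·A)u₀‖, the derivative of h satisfies h'(0) = inf_{t > 0} h'(t); in particular h'(t) ≥ − Re⟨A u₀, u₀⟩ for every t ≥ 0. -/

import Mathlib

open scoped InnerProductSpace
open NormedSpace

/-!
Along `u t = exp (-t • A) u₀`, which solves `u' = -A u` and never vanishes because `exp (-t • A)`
is invertible, the function `h' = -Re⟪A u, u⟫ / ‖u‖` has derivative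
`((Re⟪A² u, u⟫ + ‖A u‖²) ‖u‖² - Re⟪A u, u⟫²) / ‖u‖³`, which the criterion makes nonnegative.
So `h'` is monotone and continuous; its value at `0` is therefore its infimum over `t > 0`, and
equals `-Re⟪A u₀, u₀⟫` because `‖u₀‖ = 1`.
-/

theorem Monotone.eq_sInf_image_Ioi {α β : Type*} [TopologicalSpace α] [LinearOrder α]
    [OrderTopology α] [DenselyOrdered α] [NoMaxOrder α] [TopologicalSpace β]
    [ConditionallyCompleteLinearOrder β] [OrderTopology β] {f : α → β} (hf : Monotone f) {a : α}
    (hfa : ContinuousWithinAt f (Set.Ioi a) a) : f a = sInf (f '' Set.Ioi a) :=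
  tendsto_nhds_unique hfa.tendsto (hf.tendsto_nhdsGT a)

section InnerProduct

variable {H : Type*} [NormedAddCommGroup H] [InnerProductSpace ℂ H]

theorem HasDerivAt.re_inner {f g : ℝ → H} {f' g' : H} {x : ℝ} (hf : HasDerivAt f f' x)
    (hg : HasDerivAt g g' x) :
    HasDerivAt (fun s => (⟪f s, g s⟫_ℂ).re) ((⟪f x, g'⟫_ℂ).re + (⟪f', g x⟫_ℂ).re) x :=
  Complex.reCLM.hasFDerivAt.comp_hasDerivAt x (hf.inner ℂ hg)

theorem HasDerivAt.norm_of_ne_zero {f : ℝ → H} {f' : H} {x : ℝ} (hf : HasDerivAt f f' x)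
    (h0 : f x ≠ 0) : HasDerivAt (‖f ·‖) ((⟪f x, f'⟫_ℂ).re / ‖f x‖) x := by
  have hsq : HasDerivAt (fun s => ‖f s‖ ^ 2) (2 * (⟪f x, f'⟫_ℂ).re) x := by
    have hre : (fun s => (⟪f s, f s⟫_ℂ).re) = (‖f ·‖ ^ 2) :=
      funext fun s => inner_self_eq_norm_sq (𝕜 := ℂ) (f s)
    have h := hf.re_inner hf
    rwa [hre, ← inner_conj_symm f' (f x), Complex.conj_re, ← two_mul] at h
  have h := hsq.sqrt (pow_ne_zero 2 (norm_ne_zero_iff.2 h0))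
  simp only [Real.sqrt_sq (norm_nonneg _)] at h
  rwa [mul_div_mul_left _ _ two_ne_zero] at h

section SolutionCurve

variable {A : H →L[ℂ] H} {u : ℝ → H} {t : ℝ}

theorem hasDerivAt_re_inner_apply_self (hu : HasDerivAt u (-A (u t)) t) :
    HasDerivAt (fun s => (⟪A (u s), u s⟫_ℂ).re)
      (-((⟪A (A (u t)), u t⟫_ℂ).re + ‖A (u t)‖ ^ 2)) t := by
  refine (((A.restrictScalars ℝ).hasFDerivAt.comp_hasDerivAt t hu).re_inner hu).congr_deriv ?_
  have hnorm : (⟪A (u t), A (u t)⟫_ℂ).re = ‖A (u t)‖ ^ 2 := inner_self_eq_norm_sq (𝕜 := ℂ) _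
  simp only [Function.comp_apply, ContinuousLinearMap.coe_restrictScalars', map_neg,
    inner_neg_left, inner_neg_right, Complex.neg_re, hnorm]
  ring

theorem hasDerivAt_norm_of_hasDerivAt_neg_apply (hu : HasDerivAt u (-A (u t)) t)
    (h0 : u t ≠ 0) :
    HasDerivAt (‖u ·‖) (-(⟪A (u t), u t⟫_ℂ).re / ‖u t‖) t := by
  convert hu.norm_of_ne_zero h0 using 2
  rw [inner_neg_right, ← inner_conj_symm, Complex.neg_re, Complex.conj_re]

theorem hasDerivAt_neg_re_inner_div_norm (hu : HasDerivAt u (-A (u t)) t) (h0 : u t ≠ 0) :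
    HasDerivAt (fun s => -(⟪A (u s), u s⟫_ℂ).re / ‖u s‖)
      ((((⟪A (A (u t)), u t⟫_ℂ).re + ‖A (u t)‖ ^ 2) * ‖u t‖ ^ 2 - (⟪A (u t), u t⟫_ℂ).re ^ 2) /
        ‖u t‖ ^ 3) t := by
  have hn : ‖u t‖ ≠ 0 := norm_ne_zero_iff.2 h0
  refine ((hasDerivAt_re_inner_apply_self hu).neg.div
    (hasDerivAt_norm_of_hasDerivAt_neg_apply hu h0) hn).congr_deriv ?_
  simp only [Pi.neg_apply]
  field_simp

theorem monotone_neg_re_inner_div_norm (hu : ∀ t, HasDerivAt u (-A (u t)) t)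
    (h0 : ∀ t, u t ≠ 0)
    (hA : ∀ x, (⟪A x, x⟫_ℂ).re ^ 2 ≤ ((⟪A (A x), x⟫_ℂ).re + ‖A x‖ ^ 2) * ‖x‖ ^ 2) :
    Monotone fun s => -(⟪A (u s), u s⟫_ℂ).re / ‖u s‖ :=
  monotone_of_hasDerivAt_nonneg (fun t => hasDerivAt_neg_re_inner_div_norm (hu t) (h0 t))
    fun t => div_nonneg (sub_nonneg.2 (hA (u t))) (by positivity)

end SolutionCurve

end InnerProduct

theorem NormedSpace.exp_apply_ne_zero {𝕜 E : Type*} [RCLike 𝕜] [NormedAddCommGroup E]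
    [NormedSpace 𝕜 E] [CompleteSpace E] (T : E →L[𝕜] E) {x : E} (hx : x ≠ 0) :
    exp T x ≠ 0 := by
  have hT : IsUnit (exp T) := isUnit_exp_of_mem_ball (𝕂 := 𝕜)
    ((expSeries_radius_eq_top 𝕜 (E →L[𝕜] E)).symm ▸ edist_lt_top _ _)
  have hbij := (Module.End.isUnit_iff _).1 (hT.map ContinuousLinearMap.toLinearMapRingHom)
  exact (map_ne_zero_iff _ hbij.injective).2 hx

theorem hasDerivAt_exp_neg_smul_apply {E : Type*} [NormedAddCommGroup E] [NormedSpace ℂ E]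
    [CompleteSpace E] (A : E →L[ℂ] E) (x : E) (t : ℝ) :
    HasDerivAt (fun s : ℝ => exp (-(s : ℂ) • A) x) (-A (exp (-(t : ℂ) • A) x)) t := by
  have hsmul : ∀ s : ℝ, -(s : ℂ) • A = s • -A := fun s => by simp
  simp only [hsmul]
  have hcomm : Commute (exp (t • -A)) (-A) := ((Commute.refl (-A)).smul_left t).exp_left
  have hexp := hasDerivAt_exp_smul_const (-A) t
  rw [hcomm.eq] at hexp
  exact ((ContinuousLinearMap.apply ℂ E x).restrictScalars ℝ).hasFDerivAt.comp_hasDerivAt t hexp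

/-- Let `H` be a complex Hilbert space and `A : H →L[ℂ] H` a bounded linear operator
satisfying the log-convexity criterion. For every unit vector `u₀`, with
`h t = ‖exp (-t • A) u₀‖` and its derivative
`h' t = - Re⟪A (exp (-t • A) u₀), exp (-t • A) u₀⟫ / ‖exp (-t • A) u₀‖`, one has
`h' 0 = inf_{t > 0} h' t`; in particular `h' t ≥ - Re⟪A u₀, u₀⟫` for every `t ≥ 0`. -/
theorem height_derivative_inf_at_zero
    {H : Type*} [NormedAddCommGroup H] [InnerProductSpace ℂ H] [CompleteSpace H]
    (A : H →L[ℂ] H)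
    (hcrit : ∀ x : H, 2 * (Complex.re ⟪A x, x⟫_ℂ) ^ 2 ≤
      Complex.re ⟪A (A x), x⟫_ℂ * ‖x‖ ^ 2 + ‖A x‖ ^ 2 * ‖x‖ ^ 2)
    (u₀ : H) (hu₀ : ‖u₀‖ = 1)
    (h' : ℝ → ℝ)
    (hh' : ∀ t : ℝ, h' t =
      -Complex.re ⟪A (NormedSpace.exp (-(t : ℂ) • A) u₀),
          NormedSpace.exp (-(t : ℂ) • A) u₀⟫_ℂ /
        ‖NormedSpace.exp (-(t : ℂ) • A) u₀‖) :
    h' 0 = sInf (h' '' Set.Ioi (0 : ℝ)) ∧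
      ∀ t : ℝ, 0 ≤ t → -Complex.re ⟪A u₀, u₀⟫_ℂ ≤ h' t := by
  have hu₀ne : u₀ ≠ 0 := norm_ne_zero_iff.1 (by simp [hu₀])
  have hu := hasDerivAt_exp_neg_smul_apply A u₀
  have hne (t : ℝ) : exp (-(t : ℂ) • A) u₀ ≠ 0 := exp_apply_ne_zero _ hu₀ne
  have hA (x : H) : (⟪A x, x⟫_ℂ).re ^ 2 ≤ ((⟪A (A x), x⟫_ℂ).re + ‖A x‖ ^ 2) * ‖x‖ ^ 2 := by
    linear_combination hcrit x + sq_nonneg (⟪A x, x⟫_ℂ).re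
  have hmono : Monotone h' := by
    rw [funext hh']
    exact monotone_neg_re_inner_div_norm hu hne hA
  have hcont : ContinuousAt h' 0 := by
    rw [funext hh']
    exact (hasDerivAt_neg_re_inner_div_norm (hu 0) (hne 0)).continuousAt
  have h0 : h' 0 = -(⟪A u₀, u₀⟫_ℂ).re := by simp [hh', hu₀]
  exact ⟨hmono.eq_sInf_image_Ioi hcont.continuousWithinAt, fun t ht => h0 ▸ hmono ht⟩
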